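/- For v in the open unit ball of ℝⁿ, the determinant of the Lorentz boost B(v) equals 1. -/

import Mathlib

open scoped RealInnerProductSpace

noncomputable def gam {n : ℕ} (v : EuclideanSpace ℝ (Fin n)) : ℝ :=
  1 / Real.sqrt (1 - ‖v‖ ^ 2)

noncomputable def eAdd {n : ℕ} (u v : EuclideanSpace ℝ (Fin n)) :
    EuclideanSpace ℝ (Fin n) :=
  (1 / (1 + ⟪u, v⟫)) •
    (u + (1 / gam u) • v + ((gam u / (1 + gam u)) * ⟪u, v⟫) • u)

noncomputable def boost {n : ℕ} (v : EuclideanSpace ℝ (Fin n)) :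
    Matrix (Unit ⊕ Fin n) (Unit ⊕ Fin n) ℝ :=
  Matrix.fromBlocks
    (Matrix.of fun _ _ => gam v)
    (Matrix.of fun _ j => gam v * v j)
    (Matrix.of fun i _ => gam v * v i)
    (1 + Matrix.of fun i j => (gam v) ^ 2 / (1 + gam v) * v i * v j)

/-!
Take the Schur complement of the `1 × 1` block `γ`: it is `I - γ/(1+γ) v vᵀ`, whose determinant
is `1 - γ/(1+γ) ‖v‖²` by the matrix determinant lemma. Since `γ² (1 - ‖v‖²) = 1`, this equals
`1/γ`, and the determinant of the boost is `γ · (1/γ) = 1`.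
-/

namespace Matrix

variable {m α : Type*} [Fintype m] [DecidableEq m]

theorem det_one_add_smul_vecMulVec [CommRing α] (r : α) (u w : m → α) :
    det (1 + r • vecMulVec u w) = 1 + r * (w ⬝ᵥ u) := by
  rw [← smul_vecMulVec, vecMulVec_eq Unit, det_one_add_replicateCol_mul_replicateRow,
    dotProduct_smul, smul_eq_mul]

theorem det_fromBlocks_unit₁₁ [Field α] {a : α} (ha : a ≠ 0) (b c : m → α) (D : Matrix m m α) :
    det (fromBlocks (of fun _ _ => a) (replicateRow Unit b) (replicateCol Unit c) D) =
      a * det (D - a⁻¹ • vecMulVec c b) := by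
  have hinv : (of fun _ _ => a⁻¹) * (of fun _ _ => a : Matrix Unit Unit α) = 1 := by
    ext; simp [mul_apply, ha]
  let _ := invertibleOfLeftInverse _ _ hinv
  rw [det_fromBlocks₁₁, invOf_eq_left_inv hinv, det_unique]
  congr 2
  ext i j
  simp only [sub_apply, mul_apply, of_apply, replicateCol_apply, replicateRow_apply,
    Finset.univ_unique, Finset.sum_singleton, Matrix.smul_apply, vecMulVec_apply, smul_eq_mul]
  ring

end Matrix

open Matrix

theorem EuclideanSpace.norm_sq_eq_dotProduct {ι : Type*} [Fintype ι] (v : EuclideanSpace ℝ ι) :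
    ‖v‖ ^ 2 = ⇑v ⬝ᵥ ⇑v := by
  rw [← real_inner_self_eq_norm_sq, EuclideanSpace.inner_eq_star_dotProduct, star_trivial]

theorem one_sub_norm_sq_pos {E : Type*} [SeminormedAddCommGroup E] {v : E} (hv : ‖v‖ < 1) :
    0 < 1 - ‖v‖ ^ 2 :=
  sub_pos.2 (pow_lt_one₀ (norm_nonneg v) hv two_ne_zero)

section LorentzFactor

variable {n : ℕ} {v : EuclideanSpace ℝ (Fin n)}

theorem gam_pos (hv : ‖v‖ < 1) : 0 < gam v :=
  one_div_pos.2 (Real.sqrt_pos.2 (one_sub_norm_sq_pos hv))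

theorem gam_sq_mul_one_sub_norm_sq (hv : ‖v‖ < 1) : gam v ^ 2 * (1 - ‖v‖ ^ 2) = 1 := by
  have h := one_sub_norm_sq_pos hv
  rw [gam, div_pow, one_pow, Real.sq_sqrt h.le, one_div_mul_cancel h.ne']

end LorentzFactor

theorem boost_eq_fromBlocks {n : ℕ} (v : EuclideanSpace ℝ (Fin n)) :
    boost v = fromBlocks (of fun _ _ => gam v) (replicateRow Unit (gam v • ⇑v))
      (replicateCol Unit (gam v • ⇑v)) (1 + (gam v ^ 2 / (1 + gam v)) • vecMulVec ⇑v ⇑v) := by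
  rw [boost]
  congr 2
  ext i j
  simp only [of_apply, Matrix.smul_apply, vecMulVec_apply, smul_eq_mul, mul_assoc]

theorem boost_det {n : ℕ} (v : EuclideanSpace ℝ (Fin n)) (hv : ‖v‖ < 1) :
    (boost v).det = 1 := by
  have hγ := gam_pos hv
  have hschur : (1 + (gam v ^ 2 / (1 + gam v)) • vecMulVec ⇑v ⇑v) -
      (gam v)⁻¹ • vecMulVec (gam v • ⇑v) (gam v • ⇑v) =
      1 + (gam v ^ 2 / (1 + gam v) - gam v) • vecMulVec ⇑v ⇑v := by
    rw [smul_vecMulVec, vecMulVec_smul, smul_smul, smul_smul, inv_mul_cancel₀ hγ.ne', one_mul,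
      add_sub_assoc, sub_smul]
  rw [boost_eq_fromBlocks, det_fromBlocks_unit₁₁ hγ.ne', hschur, det_one_add_smul_vecMulVec,
    ← EuclideanSpace.norm_sq_eq_dotProduct]
  field_simp
  linear_combination gam_sq_mul_one_sub_norm_sq hv
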